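/- Let f : ℝ → ℝ be a continuous function satisfying f(x + π) = f(x) and f(π − x) = f(x) for all x ≥ 0, such that the improper integral I = ∫₀^∞ (sin x / x) f(x) dx exists. Then I = ∫₀^{π/2} sin t · (1/t + Σ_{μ=1}^∞ (−1)^μ (1/(t + μπ) + 1/(t − μπ))) f(t) dt, where the series inside the integral converges for every t ∈ (0, π/2]. -/

import Mathlib

/-!
Split `∫₀^{(N+1)π}` into periods and fold each period `[kπ, (k+1)π]` onto `[0, π/2]` with the
periodicity and the symmetry of `f`: the integrand becomes `sin t * K_N t * f t`, where `K_N` is a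
partial sum of the alternating series `∑ₖ (-1)ᵏ (1 / (t + kπ) + 1 / ((k+1)π - t))`. Regrouped,
`K_N t` is `1 / t`, plus a partial sum of the partial-fraction series of `1 / sin t`, plus a pole
term `± 1 / (t - (N+1)π)` that tends to `0`. The series terms are `O(1 / μ²)` uniformly on
`|t| ≤ π / 2`, so `sin t * K_N t` is uniformly bounded and dominated convergence lets `N → ∞`
under the integral.
-/

open Real Filter MeasureTheory intervalIntegral Topology

lemma integral_eq_integral_fold {E : Type*} [NormedAddCommGroup E] [NormedSpace ℝ E]
    {g : ℝ → E} {a b : ℝ} (hg : IntervalIntegrable g volume a b) :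
    ∫ x in a..b, g x = ∫ x in 0..(b - a) / 2, (g (a + x) + g (b - x)) := by
  have hmid : (a + b) / 2 ∈ Set.uIcc a b := by
    rcases le_total a b with h | h
    · rw [Set.uIcc_of_le h]; constructor <;> linarith
    · rw [Set.uIcc_of_ge h]; constructor <;> linarith
  have hleft := hg.mono_set (Set.uIcc_subset_uIcc_left hmid)
  have hright := hg.mono_set (Set.uIcc_subset_uIcc_right hmid)
  have hleft' : IntervalIntegrable (fun x => g (a + x)) volume 0 ((b - a) / 2) := by
    convert hleft.comp_add_left a using 1 <;> ring
  have hright' : IntervalIntegrable (fun x => g (b - x)) volume 0 ((b - a) / 2) := by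
    convert (hright.comp_sub_left b).symm using 1 <;> ring
  rw [integral_add hleft' hright', integral_comp_add_left, integral_comp_sub_left,
    ← integral_add_adjacent_intervals hleft hright]
  congr 1 <;> congr 1 <;> ring

lemma intervalIntegrable_sin_div_mul {f : ℝ → ℝ} (hf : Continuous f) (a b : ℝ) :
    IntervalIntegrable (fun x => sin x / x * f x) volume a b :=
  ((continuous_sinc.mul hf).intervalIntegrable a b).congr_ae <| ae_restrict_of_ae <|
    (Measure.ae_ne volume 0).mono fun x hx => by simp [sinc_of_ne_zero hx]

lemma apply_add_nat_mul_eq_of_nonneg {α : Type*} {f : ℝ → α} {p : ℝ} (hp : 0 ≤ p)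
    (hper : ∀ x, 0 ≤ x → f (x + p) = f x) {x : ℝ} (hx : 0 ≤ x) (k : ℕ) :
    f (x + k * p) = f x := by
  induction k with
  | zero => simp
  | succ k ih => rw [Nat.cast_succ, add_one_mul, ← add_assoc, hper _ (by positivity), ih]

/-- The `(μ + 1)`-th term of the partial-fraction expansion
`1 / sin t = 1 / t + ∑_{μ ≥ 1} (-1) ^ μ (1 / (t + μπ) + 1 / (t - μπ))`. -/
noncomputable def cscTerm (t : ℝ) (μ : ℕ) : ℝ :=
  (-1 : ℝ) ^ (μ + 1) * (1 / (t + ((μ : ℝ) + 1) * π) + 1 / (t - ((μ : ℝ) + 1) * π))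

lemma abs_cscTerm_le {t : ℝ} (ht : |t| ≤ π / 2) (μ : ℕ) :
    |cscTerm t μ| ≤ 2 / (π * ((μ : ℝ) + 1) ^ 2) := by
  have hπ := pi_pos
  set m : ℝ := (μ : ℝ) + 1
  have hm : 1 ≤ m := by simp [m]
  have hmπ : π ≤ m * π := le_mul_of_one_le_left hπ.le hm
  obtain ⟨ht₁, ht₂⟩ := abs_le.mp ht
  have ht2 : t ^ 2 ≤ (π / 2) ^ 2 := by rw [← sq_abs]; gcongr
  have hden : 0 < (m * π) ^ 2 - t ^ 2 := by nlinarith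
  have hsum : 1 / (t + m * π) + 1 / (t - m * π) = -(2 * t / ((m * π) ^ 2 - t ^ 2)) := by
    have h1 : t + m * π ≠ 0 := by linarith
    have h2 : t - m * π ≠ 0 := by linarith
    rw [div_add_div _ _ h1 h2, ← neg_div, div_eq_div_iff (mul_ne_zero h1 h2) hden.ne']
    ring
  rw [cscTerm, hsum, abs_mul, abs_pow, abs_neg, abs_one, one_pow, one_mul, abs_neg, abs_div,
    abs_mul, abs_two, abs_of_pos hden, div_le_div_iff₀ hden (by positivity)]
  nlinarith [abs_nonneg t, mul_le_mul_of_nonneg_right ht (by positivity : 0 ≤ π * m ^ 2)]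

lemma summable_two_div_pi_mul_succ_sq :
    Summable fun μ : ℕ => 2 / (π * ((μ : ℝ) + 1) ^ 2) := by
  have := ((summable_nat_add_iff 1).mpr (Real.summable_one_div_nat_pow.mpr one_lt_two)).mul_left
    (2 / π)
  refine this.congr fun μ => ?_
  rw [div_mul_div_comm, mul_one, Nat.cast_succ]

lemma summable_cscTerm {t : ℝ} (ht : |t| ≤ π / 2) : Summable (cscTerm t) :=
  .of_norm_bounded summable_two_div_pi_mul_succ_sq (abs_cscTerm_le ht)

noncomputable def foldedKernel (t : ℝ) (N : ℕ) : ℝ :=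
  ∑ k ∈ Finset.range (N + 1), (-1 : ℝ) ^ k * (1 / (t + k * π) + 1 / ((k + 1) * π - t))

lemma foldedKernel_eq (t : ℝ) (N : ℕ) :
    foldedKernel t N = 1 / t + ∑ μ ∈ Finset.range N, cscTerm t μ
      + (-1 : ℝ) ^ (N + 1) * (1 / (t - (N + 1) * π)) := by
  have hflip : ∀ n : ℕ, 1 / (((n : ℝ) + 1) * π - t) = -(1 / (t - (n + 1) * π)) := fun n => by
    rw [← one_div_neg_eq_neg_one_div, neg_sub]
  induction N with
  | zero => simp [foldedKernel, hflip]
  | succ n ih =>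
    rw [foldedKernel, Finset.sum_range_succ, ← foldedKernel, ih, Finset.sum_range_succ, cscTerm,
      hflip]
    push_cast
    ring

lemma tendsto_succ_mul_pi_atTop : Tendsto (fun N : ℕ => ((N : ℝ) + 1) * π) atTop atTop :=
  (tendsto_atTop_add_const_right _ 1 tendsto_natCast_atTop_atTop).atTop_mul_const pi_pos

lemma tendsto_foldedKernel {t : ℝ} (ht : |t| ≤ π / 2) :
    Tendsto (foldedKernel t) atTop (𝓝 (1 / t + ∑' μ, cscTerm t μ)) := by
  have hpole :
      Tendsto (fun N : ℕ => (-1 : ℝ) ^ (N + 1) * (1 / (t - (N + 1) * π))) atTop (𝓝 0) := by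
    rw [tendsto_zero_iff_norm_tendsto_zero]
    simp only [norm_mul, norm_pow, norm_neg, norm_one, one_pow, one_mul, one_div, norm_inv,
      Real.norm_eq_abs, abs_sub_comm t, sub_eq_add_neg _ t]
    exact tendsto_inv_atTop_zero.comp <| tendsto_abs_atTop_atTop.comp <|
      tendsto_atTop_add_const_right _ (-t) tendsto_succ_mul_pi_atTop
  have hlim := ((tendsto_const_nhds (x := 1 / t)).add
    (summable_cscTerm ht).hasSum.tendsto_sum_nat).add hpole
  rw [add_zero] at hlim
  exact hlim.congr fun N => (foldedKernel_eq t N).symm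

lemma abs_sin_mul_foldedKernel_le {t : ℝ} (ht : |t| ≤ π / 2) (N : ℕ) :
    |sin t * foldedKernel t N| ≤ 2 + ∑' μ : ℕ, 2 / (π * ((μ : ℝ) + 1) ^ 2) := by
  have hπ := pi_gt_three
  obtain ⟨ht₁, ht₂⟩ := abs_le.mp ht
  have hsinc : |sin t * (1 / t)| ≤ 1 := by
    rw [mul_one_div, abs_div]
    exact div_le_one_of_le₀ abs_sin_le_abs (abs_nonneg t)
  have hpartial : |sin t * ∑ μ ∈ Finset.range N, cscTerm t μ|
      ≤ ∑' μ : ℕ, 2 / (π * ((μ : ℝ) + 1) ^ 2) := calc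
    _ ≤ |∑ μ ∈ Finset.range N, cscTerm t μ| := by
      rw [abs_mul]; exact mul_le_of_le_one_left (abs_nonneg _) (abs_sin_le_one t)
    _ ≤ ∑ μ ∈ Finset.range N, 2 / (π * ((μ : ℝ) + 1) ^ 2) :=
      (Finset.abs_sum_le_sum_abs _ _).trans (Finset.sum_le_sum fun μ _ => abs_cscTerm_le ht μ)
    _ ≤ _ := summable_two_div_pi_mul_succ_sq.sum_le_tsum _ fun μ _ => by positivity
  have hpole : |sin t * ((-1 : ℝ) ^ (N + 1) * (1 / (t - (N + 1) * π)))| ≤ 1 := by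
    have hN : (1 : ℝ) ≤ N + 1 := by simp
    have hden : 1 ≤ |t - (N + 1) * π| := by
      rw [abs_sub_comm, abs_of_pos (by nlinarith)]
      nlinarith
    rw [abs_mul, abs_mul, abs_pow, abs_neg, abs_one, one_pow, one_mul, abs_div, abs_one]
    exact mul_le_one₀ (abs_sin_le_one t) (by positivity) (div_le_one_of_le₀ hden (abs_nonneg _))
  rw [foldedKernel_eq, mul_add, mul_add]
  linarith [abs_add_le (sin t * (1 / t) + sin t * ∑ μ ∈ Finset.range N, cscTerm t μ)
    (sin t * ((-1 : ℝ) ^ (N + 1) * (1 / (t - (N + 1) * π)))),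
    abs_add_le (sin t * (1 / t)) (sin t * ∑ μ ∈ Finset.range N, cscTerm t μ)]

lemma sin_div_mul_fold_eq {f : ℝ → ℝ} (hper : ∀ x : ℝ, 0 ≤ x → f (x + π) = f x)
    (hsym : ∀ x : ℝ, 0 ≤ x → f (π - x) = f x) {t : ℝ} (ht₀ : 0 ≤ t) (htπ : t ≤ π) (k : ℕ) :
    sin (k * π + t) / (k * π + t) * f (k * π + t)
      + sin ((k + 1) * π - t) / ((k + 1) * π - t) * f ((k + 1) * π - t)
      = sin t * ((-1 : ℝ) ^ k * (1 / (t + k * π) + 1 / ((k + 1) * π - t))) * f t := by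
  rw [show (k + 1) * π - t = (π - t) + k * π by ring, add_comm (k * π) t, sin_add_nat_mul_pi,
    sin_add_nat_mul_pi, sin_pi_sub, apply_add_nat_mul_eq_of_nonneg pi_pos.le hper ht₀,
    apply_add_nat_mul_eq_of_nonneg pi_pos.le hper (sub_nonneg.mpr htπ), hsym t ht₀]
  ring

lemma integral_sin_div_mul_eq_integral_foldedKernel {f : ℝ → ℝ} (hf : Continuous f)
    (hper : ∀ x : ℝ, 0 ≤ x → f (x + π) = f x) (hsym : ∀ x : ℝ, 0 ≤ x → f (π - x) = f x)
    (N : ℕ) :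
    ∫ x in (0 : ℝ)..(N + 1) * π, sin x / x * f x
      = ∫ t in (0 : ℝ)..π / 2, sin t * foldedKernel t N * f t := by
  set g : ℝ → ℝ := fun x => sin x / x * f x
  have hg := intervalIntegrable_sin_div_mul hf
  have hshift (c : ℝ) : IntervalIntegrable (fun t => g (c + t)) volume 0 (π / 2) := by
    simpa using (hg c (c + π / 2)).comp_add_left c
  have hreflect (c : ℝ) : IntervalIntegrable (fun t => g (c - t)) volume 0 (π / 2) := by
    simpa using (hg c (c - π / 2)).comp_sub_left c
  calc ∫ x in (0 : ℝ)..(N + 1) * π, g x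
      = ∑ k ∈ Finset.range (N + 1), ∫ x in (k * π)..((k + 1) * π), g x := by
        have hsplit := sum_integral_adjacent_intervals (μ := volume) (f := g)
          (a := fun k : ℕ => (k : ℝ) * π) (n := N + 1) fun k _ => hg _ _
        simpa using hsplit.symm
    _ = ∑ k ∈ Finset.range (N + 1),
          ∫ t in (0 : ℝ)..π / 2, (g (k * π + t) + g ((k + 1) * π - t)) := by
        refine Finset.sum_congr rfl fun k _ => ?_
        rw [integral_eq_integral_fold (hg _ _)]
        congr 1
        ring
    _ = ∫ t in (0 : ℝ)..π / 2,
          ∑ k ∈ Finset.range (N + 1), (g (k * π + t) + g ((k + 1) * π - t)) :=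
        (integral_finsetSum fun k _ => (hshift _).add (hreflect _)).symm
    _ = ∫ t in (0 : ℝ)..π / 2, sin t * foldedKernel t N * f t := by
        refine integral_congr fun t ht => ?_
        rw [Set.uIcc_of_le (by positivity)] at ht
        simp only [foldedKernel, Finset.mul_sum, Finset.sum_mul, g]
        exact Finset.sum_congr rfl fun k _ =>
          sin_div_mul_fold_eq hper hsym ht.1 (by linarith [ht.2, pi_pos]) k

lemma tendsto_integral_sin_mul_foldedKernel_mul {f : ℝ → ℝ} (hf : Continuous f) :
    Tendsto (fun N : ℕ => ∫ t in (0 : ℝ)..π / 2, sin t * foldedKernel t N * f t) atTop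
      (𝓝 (∫ t in (0 : ℝ)..π / 2, sin t * (1 / t + ∑' μ, cscTerm t μ) * f t)) := by
  have hπ := pi_pos
  obtain ⟨C, hC⟩ :=
    (isCompact_Icc (a := 0) (b := π / 2)).exists_bound_of_continuousOn hf.continuousOn
  have hmem {t : ℝ} (ht : t ∈ Set.uIoc 0 (π / 2)) : t ∈ Set.Icc 0 (π / 2) := by
    rw [Set.uIoc_of_le (by positivity)] at ht
    exact Set.Ioc_subset_Icc_self ht
  have habs {t : ℝ} (ht : t ∈ Set.uIoc 0 (π / 2)) : |t| ≤ π / 2 :=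
    abs_le.mpr ⟨by linarith [(hmem ht).1], (hmem ht).2⟩
  refine tendsto_integral_filter_of_dominated_convergence
    (fun _ => (2 + ∑' μ : ℕ, 2 / (π * ((μ : ℝ) + 1) ^ 2)) * C)
    (.of_forall fun N => Measurable.aestronglyMeasurable <| by unfold foldedKernel; fun_prop)
    (.of_forall fun N => ae_of_all _ fun t ht => ?_)
    intervalIntegrable_const (ae_of_all _ fun t ht => ?_)
  · rw [norm_mul, Real.norm_eq_abs]
    exact mul_le_mul (abs_sin_mul_foldedKernel_le (habs ht) N)
      (hC t (hmem ht)) (norm_nonneg _) (by positivity)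
  · exact ((tendsto_foldedKernel (habs ht)).const_mul (sin t)).mul_const (f t)

/-- Key intermediate identity in the proof of Theorem 1: if `f` is continuous,
`π`-periodic and symmetric about `π/2` on `[0, ∞)`, and the improper integral
`I = ∫₀^∞ (sin x / x) f x dx` exists, then
`I = ∫₀^{π/2} sin t * (1/t + ∑_{μ=1}^∞ (-1)^μ (1/(t + μπ) + 1/(t - μπ))) f t dt`,
the series converging for every `t ∈ (0, π/2]`. -/
theorem integral_eq_integral_partial_fractions (f : ℝ → ℝ) (hf : Continuous f)
    (hper : ∀ x : ℝ, 0 ≤ x → f (x + π) = f x)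
    (hsym : ∀ x : ℝ, 0 ≤ x → f (π - x) = f x)
    (I : ℝ)
    (hI : Tendsto (fun T : ℝ => ∫ x in (0:ℝ)..T, Real.sin x / x * f x)
      atTop (nhds I)) :
    (∀ t ∈ Set.Ioc (0:ℝ) (π / 2),
      Summable (fun μ : ℕ =>
        (-1 : ℝ) ^ (μ + 1) * (1 / (t + ((μ : ℝ) + 1) * π) + 1 / (t - ((μ : ℝ) + 1) * π))))
    ∧ I = ∫ t in (0:ℝ)..(π / 2),
        Real.sin t * (1 / t + ∑' μ : ℕ,
          (-1 : ℝ) ^ (μ + 1) * (1 / (t + ((μ : ℝ) + 1) * π) + 1 / (t - ((μ : ℝ) + 1) * π)))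
          * f t := by
  refine ⟨fun t ht => summable_cscTerm (abs_le.mpr ⟨by linarith [ht.1, pi_pos], ht.2⟩), ?_⟩
  have hperiods := hI.comp tendsto_succ_mul_pi_atTop
  simp only [Function.comp_def, integral_sin_div_mul_eq_integral_foldedKernel hf hper hsym]
    at hperiods
  exact tendsto_nhds_unique hperiods (tendsto_integral_sin_mul_foldedKernel_mul hf)
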